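/- arXiv:1811.07379 — 2 statements merged into one kernel-verified Lean document; each statement's English description precedes it below -/
import Mathlib

section
/- Let K ⊆ V ⊗ k be a strictly characteristic subspace. Then the subspace l_K := K ∩ φ(K) ∩ ⋯ ∩ φ^{σ₀−1}(K) is one-dimensional over k, and φ^{σ₀−1}(K) = l_K + φ(l_K) + ⋯ + φ^{σ₀−1}(l_K). -/
open TensorProduct

noncomputable section

variable (p : ℕ) [Fact p.Prime] (k : Type) [Field k] [CharP k p] [Algebra (ZMod p) k]

/-- The `p`-power (Frobenius) map on `k` as a `ZMod p`-linear map. -/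
def frobLin : k →ₗ[ZMod p] k where
  toFun a := a ^ p
  map_add' a b := add_pow_char a b p
  map_smul' c a := by
    simp only [RingHom.id_apply]
    rw [Algebra.smul_def, Algebra.smul_def, mul_pow, ← map_pow, ZMod.pow_card]

variable (V : Type) [AddCommGroup V] [Module (ZMod p) V]

/-- The Frobenius-semilinear endomorphism `φ = id_V ⊗ (λ ↦ λ^p)` of `k ⊗[𝔽_p] V`. -/
def frobT : (k ⊗[ZMod p] V) →ₛₗ[frobenius k p] (k ⊗[ZMod p] V) where
  toFun := LinearMap.rTensor V (frobLin p k)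
  map_add' := map_add _
  map_smul' c x := by
    induction x using TensorProduct.induction_on with
    | zero => simp
    | tmul a v =>
        simp [smul_tmul', frobLin, frobenius_def, mul_pow]
    | add x y hx hy => simp_all [smul_add]

variable [IsAlgClosed k]

instance : RingHomSurjective (frobenius k p) := ⟨surjective_frobenius k p⟩

/-- The base change to `k` of the bilinear form `B`. -/
abbrev bcForm (B : LinearMap.BilinForm (ZMod p) V) :
    LinearMap.BilinForm k (k ⊗[ZMod p] V) :=
  LinearMap.BilinForm.baseChange k B

variable (σ₀ : ℕ) (B : LinearMap.BilinForm (ZMod p) V)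

/-- `K ⊆ V ⊗ k` is a characteristic subspace: totally isotropic of dimension `σ₀`,
and `K + φ(K)` has dimension `σ₀ + 1`. -/
def IsCharacteristicSub (K : Submodule k (k ⊗[ZMod p] V)) : Prop :=
  (∀ x ∈ K, ∀ y ∈ K, bcForm p k V B x y = 0) ∧
  Module.finrank k K = σ₀ ∧
  Module.finrank k ↥(K ⊔ Submodule.map (frobT p k V) K) = σ₀ + 1

/-- `K` is strictly characteristic if moreover `∑ᵢ φ^i(K) = V ⊗ k`. -/
def IsStrictlyCharacteristicSub (K : Submodule k (k ⊗[ZMod p] V)) : Prop :=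
  IsCharacteristicSub p k V σ₀ B K ∧
  (⨆ i : ℕ, (Submodule.map (frobT p k V))^[i] K) = ⊤

/-- `l_K = K ∩ φ(K) ∩ ⋯ ∩ φ^{σ₀ − 1}(K)`. -/
def lK (K : Submodule k (k ⊗[ZMod p] V)) : Submodule k (k ⊗[ZMod p] V) :=
  ⨅ i : Fin σ₀, (Submodule.map (frobT p k V))^[(i : ℕ)] K

/-- The group `O_K(V)` of isometries of `(V, B)` such that `g ⊗ k` maps `K` to itself. -/
def OK (K : Submodule k (k ⊗[ZMod p] V)) : Subgroup (V ≃ₗ[ZMod p] V) where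
  carrier := {g : V ≃ₗ[ZMod p] V | (∀ x y : V, B (g x) (g y) = B x y) ∧
    Submodule.map (LinearMap.baseChange k (g : V →ₗ[ZMod p] V)) K = K}
  one_mem' := by
    refine ⟨fun x y => rfl, ?_⟩
    rw [LinearEquiv.coe_toLinearMap_one, LinearMap.baseChange_id, Submodule.map_id]
  mul_mem' := by
    rintro g h ⟨hg1, hg2⟩ ⟨hh1, hh2⟩
    refine ⟨fun x y => (hg1 (h x) (h y)).trans (hh1 x y), ?_⟩
    have hco : ((g * h : V ≃ₗ[ZMod p] V) : V →ₗ[ZMod p] V)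
        = (g : V →ₗ[ZMod p] V).comp (h : V →ₗ[ZMod p] V) := rfl
    rw [hco, LinearMap.baseChange_comp, Submodule.map_comp, hh2, hg2]
  inv_mem' := by
    rintro g ⟨hg1, hg2⟩
    constructor
    · intro x y
      have h1 : g (g⁻¹ x) = x := g.apply_symm_apply x
      have h2 : g (g⁻¹ y) = y := g.apply_symm_apply y
      have := hg1 (g⁻¹ x) (g⁻¹ y)
      rw [h1, h2] at this
      exact this.symm
    · conv_lhs => rw [← hg2]
      rw [← Submodule.map_comp, ← LinearMap.baseChange_comp]
      have hco : ((g⁻¹ : V ≃ₗ[ZMod p] V) : V →ₗ[ZMod p] V).comp (g : V →ₗ[ZMod p] V)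
          = LinearMap.id := by
        ext x
        exact g.symm_apply_apply x
      rw [hco, LinearMap.baseChange_id, Submodule.map_id]


section AuxLemmas

open Module

set_option linter.unusedSectionVars false

open Module in
-- helpers
lemma frobT_tmul (a : k) (v : V) : frobT p k V (a ⊗ₜ v) = (a ^ p) ⊗ₜ v := rfl

lemma frobLin_bijective : Function.Bijective (frobLin p k) := by
  constructor
  · intro a b h
    exact frobenius_inj k p (by simpa [frobenius_def, frobLin] using h)
  · intro a
    obtain ⟨b, hb⟩ := surjective_frobenius k p a
    exact ⟨b, by simpa [frobenius_def, frobLin] using hb⟩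

lemma frobT_bijective : Function.Bijective (frobT p k V) := by
  have h : ⇑(frobT p k V) = ⇑(LinearEquiv.rTensor V
      (LinearEquiv.ofBijective (frobLin p k) (frobLin_bijective p k))) := by
    rfl
  rw [h]
  exact (LinearEquiv.rTensor V _).bijective

set_option linter.unusedSectionVars false

lemma frobT_form (B : LinearMap.BilinForm (ZMod p) V) (x y : k ⊗[ZMod p] V) :
    LinearMap.BilinForm.baseChange k B (frobT p k V x) (frobT p k V y)
      = (LinearMap.BilinForm.baseChange k B x y) ^ p := by
  have hsm : ∀ (r : ZMod p) (z : k), (r • z) ^ p = r • z ^ p := by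
    intro r z
    rw [Algebra.smul_def, Algebra.smul_def, mul_pow, ← map_pow, ZMod.pow_card]
  have hp : p ≠ 0 := (Fact.out : p.Prime).ne_zero
  induction x using TensorProduct.induction_on with
  | zero => simp [zero_pow hp]
  | add u v hu hv => simp only [map_add, LinearMap.add_apply, hu, hv, add_pow_char]
  | tmul a v =>
    induction y using TensorProduct.induction_on with
    | zero => simp [zero_pow hp]
    | add u w hu hw => simp only [map_add, hu, hw, add_pow_char]
    | tmul b w =>
      rw [frobT_tmul, frobT_tmul, LinearMap.BilinForm.baseChange_tmul,
        LinearMap.BilinForm.baseChange_tmul, hsm, mul_pow]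

lemma finrank_map_frobT [FiniteDimensional k (k ⊗[ZMod p] V)]
    (W : Submodule k (k ⊗[ZMod p] V)) :
    finrank k (W.map (frobT p k V)) = finrank k W := by
  classical
  set φ := frobT p k V with hφ
  set n := finrank k W with hn
  haveI : Module.Free k W := Module.Free.of_divisionRing k W
  obtain ⟨b⟩ : Nonempty (Basis (Fin n) k W) := ⟨Module.finBasis k W⟩
  have hWspan : W = Submodule.span k (Set.range fun i => (b i : k ⊗[ZMod p] V)) := by
    have h1 : Submodule.span k (Set.range b) = ⊤ := b.span_eq
    have := congrArg (Submodule.map W.subtype) h1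
    rw [Submodule.map_span, Submodule.map_subtype_top, ← Set.range_comp] at this
    exact this.symm
  have hli : LinearIndependent k (fun i => (b i : k ⊗[ZMod p] V)) := by
    have := b.linearIndependent.map_injOn W.subtype (fun _ _ _ _ h => Subtype.ext h)
    exact this
  have hli2 : LinearIndependent k (fun i => φ ((b i : k ⊗[ZMod p] V))) := by
    rw [Fintype.linearIndependent_iff]
    intro g hg i
    choose d hd using fun i => surjective_frobenius k p (g i)
    have hsum : φ (∑ j, d j • (b j : k ⊗[ZMod p] V)) = 0 := by
      rw [map_sum]
      rw [← hg]
      congr 1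
      ext j
      rw [LinearMap.map_smulₛₗ, hd]
    have h0 : (∑ j, d j • (b j : k ⊗[ZMod p] V)) = 0 :=
      (frobT_bijective p k V).1 (by simpa using hsum)
    have hdz : d i = 0 := Fintype.linearIndependent_iff.mp hli _ h0 i
    rw [← hd, hdz, map_zero]
  have hmap : W.map φ = Submodule.span k (Set.range fun i => φ ((b i : k ⊗[ZMod p] V))) := by
    conv_lhs => rw [hWspan]
    rw [Submodule.map_span, ← Set.range_comp]
    rfl
  rw [hmap, finrank_span_eq_card hli2, Fintype.card_fin]

lemma orthogonal_map_frobT (B : LinearMap.BilinForm (ZMod p) V)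
    (W : Submodule k (k ⊗[ZMod p] V)) :
    (LinearMap.BilinForm.baseChange k B).orthogonal (W.map (frobT p k V))
      = ((LinearMap.BilinForm.baseChange k B).orthogonal W).map (frobT p k V) := by
  have hp : p ≠ 0 := (Fact.out : p.Prime).ne_zero
  ext x
  simp only [Submodule.mem_map, LinearMap.BilinForm.mem_orthogonal_iff]
  constructor
  · intro h
    obtain ⟨x', rfl⟩ := (frobT_bijective p k V).2 x
    refine ⟨x', fun w hw => ?_, rfl⟩
    have := h (frobT p k V w) ⟨w, hw, rfl⟩
    rw [frobT_form] at this
    exact pow_eq_zero_iff hp |>.mp this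
  · rintro ⟨x', hx', rfl⟩ n ⟨w, hw, rfl⟩
    rw [frobT_form, hx' w hw, zero_pow hp]

lemma iSup_fin_coe_succ {α : Type*} [CompleteLattice α] (n : ℕ) (g : ℕ → α) :
    (⨆ i : Fin (n + 1), g i) = (⨆ i : Fin n, g i) ⊔ g n := by
  apply le_antisymm
  · apply iSup_le
    intro i
    rcases i with ⟨iv, hiv⟩
    rcases Nat.lt_succ_iff_lt_or_eq.mp hiv with h | rfl
    · exact le_sup_of_le_left (le_iSup_of_le ⟨iv, h⟩ le_rfl)
    · exact le_sup_right
  · refine sup_le (iSup_le fun i => le_iSup_of_le ⟨i, by omega⟩ le_rfl) ?_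
    exact le_iSup_of_le ⟨n, by omega⟩ le_rfl

lemma iInf_fin_coe_succ {α : Type*} [CompleteLattice α] (n : ℕ) (g : ℕ → α) :
    (⨅ i : Fin (n + 1), g i) = (⨅ i : Fin n, g i) ⊓ g n := by
  apply le_antisymm
  · refine le_inf (le_iInf fun i => iInf_le_of_le ⟨i, by omega⟩ le_rfl) ?_
    exact iInf_le_of_le ⟨n, by omega⟩ le_rfl
  · apply le_iInf
    intro i
    rcases i with ⟨iv, hiv⟩
    rcases Nat.lt_succ_iff_lt_or_eq.mp hiv with h | rfl
    · exact inf_le_of_left_le (iInf_le_of_le ⟨iv, h⟩ le_rfl)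
    · exact inf_le_right

lemma iSup_fin_one {α : Type*} [CompleteLattice α] (g : ℕ → α) :
    (⨆ i : Fin 1, g i) = g 0 := by
  apply le_antisymm
  · exact iSup_le fun i => by rcases i with ⟨iv, hiv⟩; interval_cases iv; exact le_rfl
  · exact le_iSup_of_le ⟨0, by omega⟩ le_rfl

lemma iInf_fin_one {α : Type*} [CompleteLattice α] (g : ℕ → α) :
    (⨅ i : Fin 1, g i) = g 0 := by
  apply le_antisymm
  · exact iInf_le_of_le ⟨0, by omega⟩ le_rfl
  · exact le_iInf fun i => by rcases i with ⟨iv, hiv⟩; interval_cases iv; exact le_rfl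

lemma baseChange_nondegenerate [FiniteDimensional (ZMod p) V]
    (B : LinearMap.BilinForm (ZMod p) V) (hnd : B.Nondegenerate) :
    (LinearMap.BilinForm.baseChange k B).Nondegenerate := by
  classical
  let b : Basis (Fin (finrank (ZMod p) V)) (ZMod p) V := Module.finBasis (ZMod p) V
  let b' := Algebra.TensorProduct.basis k b
  apply LinearMap.BilinForm.nondegenerate_of_det_ne_zero _ b'
  have hM : LinearMap.BilinForm.toMatrix b' (LinearMap.BilinForm.baseChange k B)
      = (algebraMap (ZMod p) k).mapMatrix (LinearMap.BilinForm.toMatrix b B) := by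
    ext i j
    simp only [LinearMap.BilinForm.toMatrix_apply, RingHom.mapMatrix_apply, Matrix.map_apply]
    rw [show b' i = (1 : k) ⊗ₜ b i from Algebra.TensorProduct.basis_apply b i,
      show b' j = (1 : k) ⊗ₜ b j from Algebra.TensorProduct.basis_apply b j,
      LinearMap.BilinForm.baseChange_tmul, mul_one, Algebra.smul_def, mul_one]
  rw [hM, ← RingHom.map_det]
  intro h
  have hdet : (LinearMap.BilinForm.toMatrix b B).det ≠ 0 :=
    (LinearMap.BilinForm.nondegenerate_iff_det_ne_zero b).mp hnd
  exact hdet ((algebraMap (ZMod p) k).injective (by simpa using h))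

end AuxLemmas

end

open Module

set_option maxHeartbeats 1000000 in
/-- for a strictly characteristic subspace `K`, the subspace
`l_K = K ∩ φ(K) ∩ ⋯ ∩ φ^(σ₀-1)(K)` is one-dimensional, and
`φ^(σ₀-1)(K) = l_K + φ(l_K) + ⋯ + φ^(σ₀-1)(l_K)`. -/
theorem statement0
    (p : ℕ) [Fact p.Prime] (hodd : Odd p)
    (k : Type) [Field k] [CharP k p] [Algebra (ZMod p) k] [IsAlgClosed k]
    (V : Type) [AddCommGroup V] [Module (ZMod p) V]
    (σ₀ : ℕ) (hσ : 1 ≤ σ₀)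
    (hdim : Module.finrank (ZMod p) V = 2 * σ₀)
    (B : LinearMap.BilinForm (ZMod p) V)
    (hsymm : B.IsSymm) (hnd : B.Nondegenerate)
    (hnn : ∀ W : Submodule (ZMod p) V,
      (∀ x ∈ W, ∀ y ∈ W, B x y = 0) → Module.finrank (ZMod p) W ≠ σ₀)
    (K : Submodule k (k ⊗[ZMod p] V))
    (hK : IsStrictlyCharacteristicSub p k V σ₀ B K)
    :
    Module.finrank k (lK p k V σ₀ K) = 1 ∧
    (Submodule.map (frobT p k V))^[σ₀ - 1] K
      = ⨆ i : Fin σ₀, (Submodule.map (frobT p k V))^[(i : ℕ)] (lK p k V σ₀ K) := by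
  classical
  obtain ⟨s, rfl⟩ : ∃ s, σ₀ = s + 1 := ⟨σ₀ - 1, by omega⟩
  haveI : FiniteDimensional (ZMod p) V := FiniteDimensional.of_finrank_pos (by omega)
  have hMdim : finrank k (k ⊗[ZMod p] V) = 2 * (s + 1) := by
    rw [finrank_baseChange]; exact hdim
  haveI : FiniteDimensional k (k ⊗[ZMod p] V) :=
    FiniteDimensional.of_finrank_pos (by rw [hMdim]; omega)
  have hndk : ((LinearMap.BilinForm.baseChange k B)).Nondegenerate := baseChange_nondegenerate p k V B hnd
  have hsymmk : ((LinearMap.BilinForm.baseChange k B)).IsSymm := LinearMap.BilinForm.isSymm_iff.mpr (LinearMap.BilinForm.IsSymm.baseChange k (LinearMap.BilinForm.isSymm_iff.mp hsymm))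
  have hreflk : ((LinearMap.BilinForm.baseChange k B)).IsRefl := hsymmk.isRefl
  obtain ⟨⟨hiso0, hrk0, hr1⟩, hstrict⟩ := hK
  -- basic facts about iterates of the Frobenius image
  have miter_finrank : ∀ (t : ℕ) (W : Submodule k (k ⊗[ZMod p] V)),
      finrank k ((Submodule.map (frobT p k V))^[t] W) = finrank k W := by
    intro t
    induction t with
    | zero => intro W; rfl
    | succ t ih =>
      intro W
      rw [Function.iterate_succ_apply', finrank_map_frobT, ih]
  have m_mono : Monotone (Submodule.map (frobT p k V)) := fun _ _ h => Submodule.map_mono h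
  have miter_mono : ∀ t : ℕ, Monotone ((Submodule.map (frobT p k V))^[t]) := fun t => m_mono.iterate t
  have miter_sup : ∀ (t : ℕ) (S T : Submodule k (k ⊗[ZMod p] V)),
      (Submodule.map (frobT p k V))^[t] (S ⊔ T) = (Submodule.map (frobT p k V))^[t] S ⊔ (Submodule.map (frobT p k V))^[t] T := by
    intro t
    induction t with
    | zero => intro S T; rfl
    | succ t ih =>
      intro S T
      rw [Function.iterate_succ_apply', ih, Submodule.map_sup,
        ← Function.iterate_succ_apply' (Submodule.map (frobT p k V)) t S,
        ← Function.iterate_succ_apply' (Submodule.map (frobT p k V)) t T]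
  have miter_top : ∀ t : ℕ, (Submodule.map (frobT p k V))^[t] (⊤ : Submodule k (k ⊗[ZMod p] V)) = ⊤ := by
    intro t
    induction t with
    | zero => rfl
    | succ t ih =>
      rw [Function.iterate_succ_apply', ih, Submodule.map_top, LinearMap.range_eq_top]
      exact (frobT_bijective p k V).2
  have miter_orth : ∀ (t : ℕ) (W : Submodule k (k ⊗[ZMod p] V)),
      ((LinearMap.BilinForm.baseChange k B)).orthogonal ((Submodule.map (frobT p k V))^[t] W) = (Submodule.map (frobT p k V))^[t] (((LinearMap.BilinForm.baseChange k B)).orthogonal W) := by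
    intro t
    induction t with
    | zero => intro W; rfl
    | succ t ih =>
      intro W
      rw [Function.iterate_succ_apply', orthogonal_map_frobT, ih,
        ← Function.iterate_succ_apply' (Submodule.map (frobT p k V)) t
          ((LinearMap.BilinForm.baseChange k B).orthogonal W)]
  have orth_iSup : ∀ (n : ℕ) (f : Fin n → Submodule k (k ⊗[ZMod p] V)),
      ((LinearMap.BilinForm.baseChange k B)).orthogonal (⨆ i, f i) = ⨅ i, ((LinearMap.BilinForm.baseChange k B)).orthogonal (f i) := by
    intro n f
    apply le_antisymm
    · exact le_iInf fun i => LinearMap.BilinForm.orthogonal_le (le_iSup f i)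
    · intro x hx
      rw [LinearMap.BilinForm.mem_orthogonal_iff]
      intro y hy
      have hker : (⨆ i, f i) ≤ LinearMap.ker (((LinearMap.BilinForm.baseChange k B)).flip x) := by
        apply iSup_le
        intro i z hz
        have h1 := (Submodule.mem_iInf _).mp hx i
        rw [LinearMap.BilinForm.mem_orthogonal_iff] at h1
        have h2 := h1 z hz
        exact LinearMap.mem_ker.mpr h2
      have h3 := hker hy
      exact LinearMap.mem_ker.mp h3
  -- the iterates of K are totally isotropic of dimension s + 1
  have iso : ∀ t : ℕ, ∀ x ∈ (Submodule.map (frobT p k V))^[t] K, ∀ y ∈ (Submodule.map (frobT p k V))^[t] K, ((LinearMap.BilinForm.baseChange k B)) x y = 0 := by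
    intro t
    induction t with
    | zero => exact hiso0
    | succ t ih =>
      intro x hx y hy
      rw [Function.iterate_succ_apply'] at hx hy
      obtain ⟨x', hx', rfl⟩ := hx
      obtain ⟨y', hy', rfl⟩ := hy
      rw [frobT_form, ih x' hx' y' hy', zero_pow (Fact.out : p.Prime).ne_zero]
  have rkKi : ∀ t : ℕ, finrank k ((Submodule.map (frobT p k V))^[t] K) = s + 1 := by
    intro t; rw [miter_finrank]; exact hrk0
  have orthKi : ∀ t : ℕ, ((LinearMap.BilinForm.baseChange k B)).orthogonal ((Submodule.map (frobT p k V))^[t] K) = (Submodule.map (frobT p k V))^[t] K := by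
    intro t
    have h1 : (Submodule.map (frobT p k V))^[t] K ≤ ((LinearMap.BilinForm.baseChange k B)).orthogonal ((Submodule.map (frobT p k V))^[t] K) := by
      intro x hx
      rw [LinearMap.BilinForm.mem_orthogonal_iff]
      intro y hy
      exact iso t y hy x hx
    have h2 : finrank k (((LinearMap.BilinForm.baseChange k B)).orthogonal ((Submodule.map (frobT p k V))^[t] K)) = s + 1 := by
      rw [LinearMap.BilinForm.finrank_orthogonal hndk, rkKi, hMdim]
      omega
    exact (Submodule.eq_of_le_of_finrank_le h1 (le_of_eq (h2.trans (rkKi t).symm))).symm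
  -- the partial sums A j = K + φ K + ... + φ^j K
  let A : ℕ → Submodule k (k ⊗[ZMod p] V) := fun j => ⨆ i : Fin (j + 1), (Submodule.map (frobT p k V))^[(i : ℕ)] K
  have hAdef : ∀ j, A j = ⨆ i : Fin (j + 1), (Submodule.map (frobT p k V))^[(i : ℕ)] K := fun _ => rfl
  have hA0 : A 0 = K := by
    rw [hAdef, iSup_fin_one (fun n => (Submodule.map (frobT p k V))^[n] K)]
    exact Function.iterate_zero_apply _ _
  have hAsucc : ∀ j, A (j + 1) = A j ⊔ (Submodule.map (frobT p k V))^[j + 1] K := by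
    intro j
    rw [hAdef (j + 1), hAdef j, iSup_fin_coe_succ (j + 1) (fun n => (Submodule.map (frobT p k V))^[n] K)]
  have hcomp : ∀ i j : ℕ, i ≤ j → (Submodule.map (frobT p k V))^[i] K ≤ A j := by
    intro i j hij
    rw [hAdef]
    exact le_iSup_of_le ⟨i, by omega⟩ le_rfl
  have hKA : ∀ j, K ≤ A j := fun j => hcomp 0 j (by omega)
  have hAmono : ∀ {j j' : ℕ}, j ≤ j' → A j ≤ A j' := by
    intro j j' h
    rw [hAdef j, hAdef j']
    exact iSup_le fun i => le_iSup_of_le ⟨(i : ℕ), by omega⟩ le_rfl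
  have hmA : ∀ j, (Submodule.map (frobT p k V)) (A j) ≤ A (j + 1) := by
    intro j
    rw [hAdef j, hAdef (j + 1), Submodule.map_iSup]
    apply iSup_le
    intro i
    have h4 : (Submodule.map (frobT p k V)) ((Submodule.map (frobT p k V))^[(i : ℕ)] K) = (Submodule.map (frobT p k V))^[(i : ℕ) + 1] K :=
      (Function.iterate_succ_apply' (Submodule.map (frobT p k V)) (i : ℕ) K).symm
    rw [h4]
    exact le_iSup_of_le ⟨(i : ℕ) + 1, by omega⟩ le_rfl
  have hAmsucc : ∀ j, A (j + 1) = A j ⊔ (Submodule.map (frobT p k V)) (A j) := by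
    intro j
    apply le_antisymm
    · rw [hAsucc]
      apply sup_le le_sup_left
      have h5 : (Submodule.map (frobT p k V))^[j + 1] K = (Submodule.map (frobT p k V)) ((Submodule.map (frobT p k V))^[j] K) := Function.iterate_succ_apply' (Submodule.map (frobT p k V)) j K
      rw [h5]
      exact le_sup_of_le_right (Submodule.map_mono (hcomp j j le_rfl))
    · exact sup_le (hAmono (by omega)) (hmA j)
  have hAKsucc : ∀ j, A (j + 1) = K ⊔ (Submodule.map (frobT p k V)) (A j) := by
    intro j
    apply le_antisymm
    · rw [hAdef]
      apply iSup_le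
      rintro ⟨iv, hiv⟩
      cases iv with
      | zero => exact le_sup_of_le_left le_rfl
      | succ i' =>
        show (Submodule.map (frobT p k V))^[i' + 1] K ≤ K ⊔ (Submodule.map (frobT p k V)) (A j)
        have h6 : (Submodule.map (frobT p k V))^[i' + 1] K = (Submodule.map (frobT p k V)) ((Submodule.map (frobT p k V))^[i'] K) := Function.iterate_succ_apply' (Submodule.map (frobT p k V)) i' K
        rw [h6]
        exact le_sup_of_le_right (Submodule.map_mono (hcomp i' j (by omega)))
    · exact sup_le (hKA _) (hmA j)
  -- dimension counts
  have hd0 : finrank k (A 0) = s + 1 := by rw [hA0]; exact hrk0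
  have hd1 : finrank k (A 1) = s + 1 + 1 := by
    have e1 : A 1 = K ⊔ (Submodule.map (frobT p k V)) K := by
      have := hAKsucc 0
      rw [hA0] at this
      exact this
    rw [e1]
    exact hr1
  have hstab : ∀ j, (Submodule.map (frobT p k V)) (A j) ≤ A j → A j = ⊤ := by
    intro j hstable
    have hall : ∀ i : ℕ, (Submodule.map (frobT p k V))^[i] K ≤ A j := by
      intro i
      induction i with
      | zero => exact hKA j
      | succ i ih =>
        have h7 : (Submodule.map (frobT p k V))^[i + 1] K = (Submodule.map (frobT p k V)) ((Submodule.map (frobT p k V))^[i] K) := Function.iterate_succ_apply' (Submodule.map (frobT p k V)) i K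
        rw [h7]
        exact le_trans (Submodule.map_mono ih) hstable
    have h8 : (⊤ : Submodule k (k ⊗[ZMod p] V)) ≤ A j := by
      rw [← hstrict]
      exact iSup_le hall
    exact top_unique h8
  have main : ∀ j : ℕ, j ≤ s →
      finrank k (A j) = s + 1 + j ∧ finrank k (A (j + 1)) = s + 1 + (j + 1) := by
    intro j
    induction j with
    | zero => intro _; exact ⟨by simpa using hd0, by simpa using hd1⟩
    | succ j ih =>
      intro hj
      obtain ⟨h1, h2⟩ := ih (by omega)
      refine ⟨h2, ?_⟩
      have hsupinf := Submodule.finrank_sup_add_finrank_inf_eq (A (j + 1)) ((Submodule.map (frobT p k V)) (A (j + 1)))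
      have hAj2 : A (j + 1 + 1) = A (j + 1) ⊔ (Submodule.map (frobT p k V)) (A (j + 1)) := hAmsucc (j + 1)
      have hmrk : finrank k ((Submodule.map (frobT p k V)) (A (j + 1))) = finrank k (A (j + 1)) := finrank_map_frobT p k V _
      have hmrk2 : finrank k ((Submodule.map (frobT p k V)) (A j)) = finrank k (A j) := finrank_map_frobT p k V _
      have hlow : finrank k ((Submodule.map (frobT p k V)) (A j)) ≤ finrank k ↥(A (j + 1) ⊓ (Submodule.map (frobT p k V)) (A (j + 1))) := by
        apply Submodule.finrank_mono
        exact le_inf (hmA j) (Submodule.map_mono (hAmono (by omega)))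
      have hmono12 : finrank k (A (j + 1)) ≤ finrank k (A (j + 1 + 1)) :=
        Submodule.finrank_mono (hAmono (by omega))
      have hne : finrank k (A (j + 1 + 1)) ≠ finrank k (A (j + 1)) := by
        intro heq
        have hEq : A (j + 1) = A (j + 1 + 1) :=
          Submodule.eq_of_le_of_finrank_le (hAmono (by omega)) (le_of_eq heq)
        have hst : (Submodule.map (frobT p k V)) (A (j + 1)) ≤ A (j + 1) := by
          have h9 := hmA (j + 1)
          rwa [← hEq] at h9
        have htop : A (j + 1) = ⊤ := hstab (j + 1) hst
        have h10 : finrank k (A (j + 1)) = 2 * (s + 1) := by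
          rw [htop, finrank_top]
          exact hMdim
        omega
      rw [← hAj2] at hsupinf
      omega
  have dA : ∀ j : ℕ, j ≤ s + 1 → finrank k (A j) = s + 1 + j := by
    intro j hj
    cases j with
    | zero => simpa using hd0
    | succ j => exact (main j (by omega)).2
  have Atop : A (s + 1) = ⊤ := by
    apply Submodule.eq_top_of_finrank_eq
    rw [dA (s + 1) le_rfl, hMdim]
    omega
  -- part 1
  have hlKdef : lK p k V (s + 1) K = ⨅ i : Fin (s + 1), (Submodule.map (frobT p k V))^[(i : ℕ)] K := rfl
  have horthA : ((LinearMap.BilinForm.baseChange k B)).orthogonal (A s) = lK p k V (s + 1) K := by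
    rw [hlKdef, hAdef, orth_iSup]
    exact iInf_congr fun i => orthKi (i : ℕ)
  have hrank1 : finrank k (lK p k V (s + 1) K) = 1 := by
    rw [← horthA, LinearMap.BilinForm.finrank_orthogonal hndk, hMdim,
      dA s (by omega)]
    omega
  -- part 2
  have horthl : ((LinearMap.BilinForm.baseChange k B)).orthogonal (lK p k V (s + 1) K) = A s := by
    rw [← horthA, LinearMap.BilinForm.orthogonal_orthogonal hndk hreflk]
  have hchain : ∀ t : ℕ, t ≤ s →
      (⨅ j : Fin (t + 1), (Submodule.map (frobT p k V))^[(j : ℕ)] (A s)) = (Submodule.map (frobT p k V))^[t] (A (s - t)) := by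
    intro t
    induction t with
    | zero =>
      intro _
      rw [iInf_fin_one (fun n => (Submodule.map (frobT p k V))^[n] (A s))]
      rfl
    | succ t ih =>
      intro hts
      rw [iInf_fin_coe_succ (t + 1) (fun n => (Submodule.map (frobT p k V))^[n] (A s)), ih (by omega)]
      have hu : s - t = (s - (t + 1)) + 1 := by omega
      have le1 : (Submodule.map (frobT p k V))^[t + 1] (A (s - (t + 1))) ≤ (Submodule.map (frobT p k V))^[t] (A (s - t)) := by
        rw [Function.iterate_succ_apply]
        apply miter_mono t
        rw [hu]
        exact hmA _
      have le2 : (Submodule.map (frobT p k V))^[t + 1] (A (s - (t + 1))) ≤ (Submodule.map (frobT p k V))^[t + 1] (A s) :=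
        miter_mono (t + 1) (hAmono (by omega))
      have hsup : (Submodule.map (frobT p k V))^[t] (A (s - t)) ⊔ (Submodule.map (frobT p k V))^[t + 1] (A s) = ⊤ := by
        have h11 : (Submodule.map (frobT p k V))^[t + 1] (A s) = (Submodule.map (frobT p k V))^[t] ((Submodule.map (frobT p k V)) (A s)) :=
          Function.iterate_succ_apply (Submodule.map (frobT p k V)) t (A s)
        rw [h11, ← miter_sup]
        have h12 : A (s - t) ⊔ (Submodule.map (frobT p k V)) (A s) = ⊤ := by
          apply top_unique
          rw [← Atop, hAKsucc s]
          exact sup_le (le_sup_of_le_left (hKA _)) le_sup_right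
        rw [h12, miter_top]
      have hrk : finrank k ↥(((Submodule.map (frobT p k V))^[t] (A (s - t))) ⊓ ((Submodule.map (frobT p k V))^[t + 1] (A s)))
          = finrank k ((Submodule.map (frobT p k V))^[t + 1] (A (s - (t + 1)))) := by
        have h13 := Submodule.finrank_sup_add_finrank_inf_eq
          ((Submodule.map (frobT p k V))^[t] (A (s - t))) ((Submodule.map (frobT p k V))^[t + 1] (A s))
        rw [hsup, finrank_top, hMdim, miter_finrank, miter_finrank,
          dA (s - t) (by omega), dA s (by omega)] at h13
        rw [miter_finrank, dA (s - (t + 1)) (by omega)]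
        omega
      exact (Submodule.eq_of_le_of_finrank_le (le_inf le1 le2) (le_of_eq hrk)).symm
  refine ⟨hrank1, ?_⟩
  have hgoalidx : s + 1 - 1 = s := by omega
  rw [hgoalidx]
  have horthS : ((LinearMap.BilinForm.baseChange k B)).orthogonal
      (⨆ i : Fin (s + 1), (Submodule.map (frobT p k V))^[(i : ℕ)] (lK p k V (s + 1) K)) = (Submodule.map (frobT p k V))^[s] K := by
    rw [orth_iSup]
    have h14 : ∀ i : Fin (s + 1),
        ((LinearMap.BilinForm.baseChange k B)).orthogonal ((Submodule.map (frobT p k V))^[(i : ℕ)] (lK p k V (s + 1) K)) = (Submodule.map (frobT p k V))^[(i : ℕ)] (A s) := by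
      intro i
      rw [miter_orth, horthl]
    rw [iInf_congr h14, hchain s le_rfl, show s - s = 0 from by omega, hA0]
  have h15 := LinearMap.BilinForm.orthogonal_orthogonal hndk hreflk
    (⨆ i : Fin (s + 1), (Submodule.map (frobT p k V))^[(i : ℕ)] (lK p k V (s + 1) K))
  rw [horthS, orthKi s] at h15
  exact h15
end

section
/- Let K ⊆ V ⊗ k be a strictly characteristic subspace, e a generator of the one-dimensional subspace l_K := K ∩ φ(K) ∩ ⋯ ∩ φ^{σ₀−1}(K), and v ∈ V a nonzero vector. Then ⟨v ⊗ 1, e⟩ ≠ 0. -/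
open TensorProduct

section Aux

variable (p : ℕ) [Fact p.Prime] (k : Type) [Field k] [CharP k p] [Algebra (ZMod p) k]
  (V : Type) [AddCommGroup V] [Module (ZMod p) V] [IsAlgClosed k]

namespace Stmt3

local notation "φ" => frobT p k V

lemma frobT_tmul (a : k) (v : V) : φ (a ⊗ₜ[ZMod p] v) = (a ^ p) ⊗ₜ[ZMod p] v := rfl

lemma frobT_injective : Function.Injective ⇑φ := by
  have : ⇑φ = ⇑(LinearMap.rTensor V (frobLin p k)) := rfl
  rw [this]
  exact Module.Flat.rTensor_preserves_injective_linearMap (M := V) (frobLin p k)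
    (fun a b hab => frobenius_inj k p hab)

lemma frobT_surjective : Function.Surjective ⇑φ := by
  have : ⇑φ = ⇑(LinearMap.rTensor V (frobLin p k)) := rfl
  rw [this]
  exact LinearMap.rTensor_surjective V (surjective_frobenius k p)

lemma frobT_one_tmul (v : V) : φ ((1 : k) ⊗ₜ[ZMod p] v) = (1 : k) ⊗ₜ[ZMod p] v := by
  rw [frobT_tmul, one_pow]

variable (B : LinearMap.BilinForm (ZMod p) V)

lemma bc_frob (x y : k ⊗[ZMod p] V) :
    bcForm p k V B (φ x) (φ y) = (bcForm p k V B x y) ^ p := by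
  induction x using TensorProduct.induction_on with
  | zero => simp [zero_pow (Fact.out : p.Prime).ne_zero]
  | add x₁ x₂ h₁ h₂ => simp [map_add, h₁, h₂, add_pow_char]
  | tmul a m =>
    induction y using TensorProduct.induction_on with
    | zero => simp [zero_pow (Fact.out : p.Prime).ne_zero]
    | add y₁ y₂ h₁ h₂ => simp [map_add, h₁, h₂, add_pow_char]
    | tmul b n =>
      rw [frobT_tmul, frobT_tmul]
      show (LinearMap.BilinForm.baseChange k B) _ _ = _
      rw [LinearMap.BilinForm.baseChange_tmul, LinearMap.BilinForm.baseChange_tmul]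
      rw [Algebra.smul_def, Algebra.smul_def, mul_pow, ← map_pow, ZMod.pow_card, mul_pow]

end Stmt3

end Aux
section Aux2
set_option linter.unusedSectionVars false

variable (p : ℕ) [Fact p.Prime] (k : Type) [Field k] [CharP k p] [Algebra (ZMod p) k]
  (V : Type) [AddCommGroup V] [Module (ZMod p) V] [IsAlgClosed k]

namespace Stmt3

local notation "φ" => frobT p k V

lemma map_comap_frobT (W : Submodule k (k ⊗[ZMod p] V)) :
    Submodule.map φ (Submodule.comap φ W) = W := by
  ext x
  simp only [Submodule.mem_map, Submodule.mem_comap]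
  constructor
  · rintro ⟨y, hy, rfl⟩; exact hy
  · intro hx
    obtain ⟨y, rfl⟩ := frobT_surjective p k V x
    exact ⟨y, hx, rfl⟩

lemma comap_map_frobT (W : Submodule k (k ⊗[ZMod p] V)) :
    Submodule.comap φ (Submodule.map φ W) = W := by
  ext x
  simp only [Submodule.mem_map, Submodule.mem_comap]
  constructor
  · rintro ⟨y, hy, hyx⟩
    rwa [← frobT_injective p k V hyx]
  · intro hx; exact ⟨x, hx, rfl⟩

lemma comap_sup_frobT (A B : Submodule k (k ⊗[ZMod p] V)) :
    Submodule.comap φ (A ⊔ B) = Submodule.comap φ A ⊔ Submodule.comap φ B := by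
  refine le_antisymm ?_ (sup_le (Submodule.comap_mono le_sup_left)
    (Submodule.comap_mono le_sup_right))
  intro x hx
  rw [Submodule.mem_comap] at hx
  obtain ⟨a, ha, b, hb, hab⟩ := Submodule.mem_sup.mp hx
  obtain ⟨a', rfl⟩ := frobT_surjective p k V a
  obtain ⟨b', rfl⟩ := frobT_surjective p k V b
  have : φ (a' + b') = φ x := by rw [map_add, hab]
  have hx' : x = a' + b' := (frobT_injective p k V this).symm
  rw [hx']
  exact Submodule.add_mem_sup (Submodule.mem_comap.mpr ha) (Submodule.mem_comap.mpr hb)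

variable [FiniteDimensional k (k ⊗[ZMod p] V)]

lemma finrank_map_frobT (W : Submodule k (k ⊗[ZMod p] V)) :
    Module.finrank k (W.map φ) = Module.finrank k W := by
  classical
  haveI := Module.Free.of_divisionRing k W
  let b : Module.Basis (Fin (Module.finrank k W)) k W := Module.finBasis k W
  let u : Fin (Module.finrank k W) → (k ⊗[ZMod p] V) := fun i => (b i : k ⊗[ZMod p] V)
  have hu_ind : LinearIndependent k u :=
    b.linearIndependent.map_injOn W.subtype (Submodule.injective_subtype W).injOn
  have hu_span : Submodule.span k (Set.range u) = W := by
    have h1 : Set.range u = W.subtype '' (Set.range b) := by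
      rw [← Set.range_comp]; rfl
    rw [h1, ← Submodule.map_span, b.span_eq, Submodule.map_top, Submodule.range_subtype]
  have hu'_ind : LinearIndependent k (⇑(frobT p k V) ∘ u) := by
    refine hu_ind.map_of_surjective_injective
      (ZeroHom.mk (frobenius k p) (map_zero _)) (frobT p k V).toAddMonoidHom
      (surjective_frobenius k p) (fun m hm => ?_) (fun r m => (frobT p k V).map_smulₛₗ r m)
    exact frobT_injective p k V (by simpa using hm)
  have hu'_span : Submodule.span k (Set.range (⇑(frobT p k V) ∘ u)) = W.map φ := by
    rw [Set.range_comp, ← Submodule.map_span, hu_span]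
  rw [← hu'_span, finrank_span_eq_card hu'_ind, Fintype.card_fin]

lemma finrank_comap_frobT (W : Submodule k (k ⊗[ZMod p] V)) :
    Module.finrank k (W.comap φ) = Module.finrank k W := by
  conv_rhs => rw [← map_comap_frobT p k V W]
  rw [finrank_map_frobT]

lemma finrank_map_iter_frobT (W : Submodule k (k ⊗[ZMod p] V)) (i : ℕ) :
    Module.finrank k ((Submodule.map φ)^[i] W) = Module.finrank k W := by
  induction i with
  | zero => rfl
  | succ i ih => rw [Function.iterate_succ_apply', finrank_map_frobT, ih]

end Stmt3

end Aux2
section Aux3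
set_option linter.unusedSectionVars false

variable (p : ℕ) [Fact p.Prime] (k : Type) [Field k] [CharP k p] [Algebra (ZMod p) k]
  (V : Type) [AddCommGroup V] [Module (ZMod p) V] [IsAlgClosed k]

namespace Stmt3

local notation "φ" => frobT p k V

lemma scalar_descent (c : k) (hc : c ^ p = c) :
    ∃ d : ZMod p, algebraMap (ZMod p) k d = c := by
  classical
  have hp1 : 1 < p := (Fact.out : p.Prime).one_lt
  set P : Polynomial k := Polynomial.X ^ p - Polynomial.X with hP
  have hP0 : P ≠ 0 := FiniteField.X_pow_card_sub_X_ne_zero k hp1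
  have hdeg : P.natDegree = p := FiniteField.X_pow_card_sub_X_natDegree_eq k hp1
  have hroot : ∀ d : ZMod p, Polynomial.IsRoot P (algebraMap (ZMod p) k d) := by
    intro d
    simp only [hP, Polynomial.IsRoot, Polynomial.eval_sub, Polynomial.eval_pow,
      Polynomial.eval_X, ← map_pow, ZMod.pow_card, sub_self]
  set S : Finset k := Finset.univ.image (algebraMap (ZMod p) k) with hS
  have hcardS : S.card = p := by
    rw [hS, Finset.card_image_of_injective _ (algebraMap (ZMod p) k).injective,
      Finset.card_univ, ZMod.card]
  have hsub : S ⊆ P.roots.toFinset := by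
    intro x hx
    rw [hS, Finset.mem_image] at hx
    obtain ⟨d, _, rfl⟩ := hx
    rw [Multiset.mem_toFinset, Polynomial.mem_roots hP0]
    exact hroot d
  have hcard2 : P.roots.toFinset.card ≤ p := by
    calc P.roots.toFinset.card ≤ Multiset.card P.roots := P.roots.toFinset_card_le
    _ ≤ P.natDegree := P.card_roots' 
    _ = p := hdeg
  have hSeq : S = P.roots.toFinset := Finset.eq_of_subset_of_card_le hsub (by omega)
  have hcr : c ∈ P.roots.toFinset := by
    rw [Multiset.mem_toFinset, Polynomial.mem_roots hP0]
    simp [hP, Polynomial.IsRoot, hc]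
  rw [← hSeq, hS, Finset.mem_image] at hcr
  obtain ⟨d, _, hd⟩ := hcr
  exact ⟨d, hd⟩

lemma frobT_fixed_descent (x : k ⊗[ZMod p] V) (hx : φ x = x) :
    ∃ w : V, x = (1 : k) ⊗ₜ[ZMod p] w := by
  classical
  let b : Module.Basis (Module.Free.ChooseBasisIndex (ZMod p) V) (ZMod p) V :=
    Module.Free.chooseBasis (ZMod p) V
  let b' := Algebra.TensorProduct.basis k b
  have hb' : ∀ i, b' i = (1 : k) ⊗ₜ[ZMod p] b i := fun i => Algebra.TensorProduct.basis_apply b i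
  set r := b'.repr x with hr
  have hx1 : x = ∑ i ∈ r.support, r i • b' i := by
    conv_lhs => rw [← b'.linearCombination_repr x]
    rw [Finsupp.linearCombination_apply, Finsupp.sum]
  have hφ : φ x = ∑ i ∈ r.support, (r i) ^ p • b' i := by
    conv_lhs => rw [hx1]
    rw [map_sum]
    refine Finset.sum_congr rfl fun i _ => ?_
    rw [LinearMap.map_smulₛₗ, hb', frobT_one_tmul]
    rw [frobenius_def]
  have hcoef : ∀ i ∈ r.support, ((r i) ^ p - r i) = 0 := by
    have hz : ∑ i ∈ r.support, ((r i) ^ p - r i) • b' i = 0 := by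
      rw [Finset.sum_congr rfl fun i _ => sub_smul ((r i)^p) (r i) (b' i),
        Finset.sum_sub_distrib, ← hφ, ← hx1, hx, sub_self]
    exact linearIndependent_iff'.mp b'.linearIndependent r.support _ hz
  choose d hd using fun i (hi : i ∈ r.support) =>
    scalar_descent p k (r i) (sub_eq_zero.mp (hcoef i hi))
  refine ⟨∑ i ∈ r.support.attach, d i i.2 • b i, ?_⟩
  rw [tmul_sum, hx1, ← Finset.sum_attach r.support (fun i => r i • b' i)]
  refine Finset.sum_congr rfl fun i _ => ?_
  rw [tmul_smul, ← hb', ← hd i i.2, algebraMap_smul]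

end Stmt3

end Aux3
section Aux4
set_option linter.unusedSectionVars false

variable (p : ℕ) [Fact p.Prime] (k : Type) [Field k] [CharP k p] [Algebra (ZMod p) k]
  (V : Type) [AddCommGroup V] [Module (ZMod p) V] [IsAlgClosed k]

namespace Stmt3

local notation "φ" => frobT p k V

lemma frobT_ker_pow (B : LinearMap.BilinForm (ZMod p) V) (z y : k ⊗[ZMod p] V)
    (hz : φ z = z) :
    bcForm p k V B z (φ y) = (bcForm p k V B z y) ^ p := by
  conv_lhs => rw [← hz]
  rw [bc_frob]

lemma rational_perp (B : LinearMap.BilinForm (ZMod p) V) (hnd : B.Nondegenerate)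
    (K : Submodule k (k ⊗[ZMod p] V))
    (hstrict : (⨆ i : ℕ, (Submodule.map φ)^[i] K) = ⊤)
    (v : V) (hperp : ∀ x ∈ K, bcForm p k V B ((1 : k) ⊗ₜ[ZMod p] v) x = 0) :
    v = 0 := by
  set L : (k ⊗[ZMod p] V) →ₗ[k] k := bcForm p k V B ((1 : k) ⊗ₜ[ZMod p] v) with hL
  have hiter : ∀ i : ℕ, (Submodule.map φ)^[i] K ≤ LinearMap.ker L := by
    intro i
    induction i with
    | zero => intro x hx; exact LinearMap.mem_ker.mpr (hperp x hx)
    | succ i ih =>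
      intro x hx
      rw [Function.iterate_succ_apply'] at hx
      obtain ⟨y, hy, rfl⟩ := hx
      rw [LinearMap.mem_ker, hL, frobT_ker_pow p k V B _ y (frobT_one_tmul p k V v)]
      rw [show bcForm p k V B ((1 : k) ⊗ₜ[ZMod p] v) y = L y from rfl,
        LinearMap.mem_ker.mp (ih hy), zero_pow (Fact.out : p.Prime).ne_zero]
  have htop : ∀ x : k ⊗[ZMod p] V, L x = 0 := by
    intro x
    have h2 : (⊤ : Submodule k (k ⊗[ZMod p] V)) ≤ LinearMap.ker L := by
      rw [← hstrict]; exact iSup_le hiter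
    exact LinearMap.mem_ker.mp (h2 Submodule.mem_top)
  refine hnd.1 v fun w => ?_
  have := htop ((1 : k) ⊗ₜ[ZMod p] w)
  rw [hL] at this
  have h3 : (LinearMap.BilinForm.baseChange k B) ((1:k) ⊗ₜ[ZMod p] v) ((1:k) ⊗ₜ[ZMod p] w) = 0 :=
    this
  rw [LinearMap.BilinForm.baseChange_tmul, mul_one, Algebra.smul_def, mul_one] at h3
  exact (algebraMap (ZMod p) k).injective (by rw [h3, map_zero])

end Stmt3

end Aux4
section Aux5
set_option linter.unusedSectionVars false

variable (p : ℕ) [Fact p.Prime] (k : Type) [Field k] [CharP k p] [Algebra (ZMod p) k]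
  (V : Type) [AddCommGroup V] [Module (ZMod p) V] [IsAlgClosed k]

namespace Stmt3

local notation "φ" => frobT p k V

lemma map_iter_sup (i : ℕ) (A B : Submodule k (k ⊗[ZMod p] V)) :
    (Submodule.map φ)^[i] (A ⊔ B) = (Submodule.map φ)^[i] A ⊔ (Submodule.map φ)^[i] B := by
  induction i generalizing A B with
  | zero => rfl
  | succ i ih => rw [Function.iterate_succ_apply, Function.iterate_succ_apply,
      Function.iterate_succ_apply, Submodule.map_sup, ih]

lemma comap_finset_biSup (s : Finset ℕ) (f : ℕ → Submodule k (k ⊗[ZMod p] V)) :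
    Submodule.comap φ (⨆ j ∈ s, f j) = ⨆ j ∈ s, Submodule.comap φ (f j) := by
  classical
  induction s using Finset.induction_on with
  | empty =>
    simp only [Finset.notMem_empty, iSup_false, iSup_bot, Submodule.comap_bot,
      LinearMap.ker_eq_bot]
    exact frobT_injective p k V
  | insert _ _ hnotmem ih =>
    rw [Finset.iSup_insert, Finset.iSup_insert, comap_sup_frobT, ih]

end Stmt3

end Aux5
open Stmt3 in
/-- for any nonzero `v ∈ V` and any generator `e` of `l_K`,
`⟨v ⊗ 1, e⟩ ≠ 0`. -/
theorem statement3
    (p : ℕ) [Fact p.Prime] (hodd : Odd p)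
    (k : Type) [Field k] [CharP k p] [Algebra (ZMod p) k] [IsAlgClosed k]
    (V : Type) [AddCommGroup V] [Module (ZMod p) V]
    (σ₀ : ℕ) (hσ : 1 ≤ σ₀)
    (hdim : Module.finrank (ZMod p) V = 2 * σ₀)
    (B : LinearMap.BilinForm (ZMod p) V)
    (hsymm : B.IsSymm) (hnd : B.Nondegenerate)
    (hnn : ∀ W : Submodule (ZMod p) V,
      (∀ x ∈ W, ∀ y ∈ W, B x y = 0) → Module.finrank (ZMod p) W ≠ σ₀)
    (K : Submodule k (k ⊗[ZMod p] V))
    (hK : IsStrictlyCharacteristicSub p k V σ₀ B K)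
    (e : k ⊗[ZMod p] V)
    (he : Submodule.span k {e} = lK p k V σ₀ K)
    (v : V) (hv : v ≠ 0) :
    bcForm p k V B ((1 : k) ⊗ₜ[ZMod p] v) e ≠ 0 := by
  intro h
  obtain ⟨⟨hiso, hdimK, hdimsup⟩, hstrict⟩ := hK
  have hfV : Module.Finite (ZMod p) V :=
    Module.finite_of_finrank_pos (by rw [hdim]; omega)
  have hfT : FiniteDimensional k (k ⊗[ZMod p] V) := Module.Finite.base_change (ZMod p) k V
  set D : ℕ → Submodule k (k ⊗[ZMod p] V) :=
    fun i => ⨅ j ∈ Finset.range (i + 1), (Submodule.map (frobT p k V))^[j] K with hD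
  have hmemD : ∀ i x, x ∈ D i ↔ ∀ j ≤ i, x ∈ (Submodule.map (frobT p k V))^[j] K := by
    intro i x
    simp only [hD, Submodule.mem_iInf, Finset.mem_range]
    exact ⟨fun H j hj => H j (by omega), fun H j hj => H j (by omega)⟩
  have hD0 : D 0 = K := by
    ext x; rw [hmemD]
    exact ⟨fun H => H 0 le_rfl, fun H j hj => by rw [Nat.le_zero.mp hj]; exact H⟩
  have hDle : ∀ i j, j ≤ i → D i ≤ (Submodule.map (frobT p k V))^[j] K :=
    fun i j hj x hx => (hmemD i x).mp hx j hj
  have hDsucc : ∀ i, D (i + 1) = D i ⊓ (Submodule.map (frobT p k V))^[i+1] K := by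
    intro i
    ext x
    rw [hmemD, Submodule.mem_inf, hmemD]
    constructor
    · intro H; exact ⟨fun j hj => H j (by omega), H (i+1) le_rfl⟩
    · rintro ⟨H1, H2⟩ j hj
      rcases Nat.lt_or_ge j (i+1) with hj' | hj'
      · exact H1 j (by omega)
      · have : j = i + 1 := by omega
        rw [this]; exact H2
  have hDmono : ∀ i, D (i + 1) ≤ D i := fun i => (hDsucc i) ▸ inf_le_left
  have hstep : ∀ i, Module.finrank k (D i) ≤ Module.finrank k (D (i + 1)) + 1 := by
    intro i
    have h1 : D i ⊔ (Submodule.map (frobT p k V))^[i+1] K ≤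
        (Submodule.map (frobT p k V))^[i] (K ⊔ Submodule.map (frobT p k V) K) := by
      rw [map_iter_sup, ← Function.iterate_succ_apply]
      exact sup_le (le_trans (hDle i i le_rfl) le_sup_left) le_sup_right
    have h2 : Module.finrank k ↥(D i ⊔ (Submodule.map (frobT p k V))^[i+1] K) ≤ σ₀ + 1 := by
      refine le_trans (Submodule.finrank_mono h1) ?_
      rw [finrank_map_iter_frobT, hdimsup]
    have h3 := Submodule.finrank_sup_add_finrank_inf_eq (D i)
      ((Submodule.map (frobT p k V))^[i+1] K)
    rw [← hDsucc i] at h3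
    have h5 : Module.finrank k ((Submodule.map (frobT p k V))^[i+1] K) = σ₀ := by
      rw [finrank_map_iter_frobT]; exact hdimK
    omega
  have hchain : ∀ i j, Module.finrank k (D i) ≤ Module.finrank k (D (i + j)) + j := by
    intro i j
    induction j with
    | zero => simp
    | succ j ih =>
      have := hstep (i + j)
      have h2 : i + (j+1) = (i + j) + 1 := by omega
      rw [h2]; omega
  have hm : σ₀ - 1 + 1 = σ₀ := by omega
  have hlKD : Submodule.span k {e} = D (σ₀ - 1) := by
    rw [he]
    unfold lK
    ext x
    rw [hmemD, Submodule.mem_iInf]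
    constructor
    · intro H j hj; exact H ⟨j, by omega⟩
    · intro H i; exact H i.1 (by omega)
  have hdimD0 : Module.finrank k (D 0) = σ₀ := by rw [hD0]; exact hdimK
  have he1 : e ≠ 0 := by
    intro he0
    rw [he0] at hlKD
    have : D (σ₀ - 1) = ⊥ := by
      rw [← hlKD, Submodule.span_singleton_eq_bot.mpr rfl]
    have h4 := hchain 0 (σ₀ - 1)
    rw [zero_add, this, finrank_bot] at h4
    omega
  have hdimlK : Module.finrank k (D (σ₀ - 1)) = 1 := by
    rw [← hlKD]; exact finrank_span_singleton he1
  have hDdim : ∀ i ≤ σ₀ - 1, Module.finrank k (D i) = σ₀ - i := by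
    intro i hi
    have hge := hchain 0 i
    rw [zero_add] at hge
    have hle' := hchain i (σ₀ - 1 - i)
    rw [show i + (σ₀ - 1 - i) = σ₀ - 1 by omega] at hle'
    omega
  have hemem : e ∈ D (σ₀ - 1) := by
    rw [← hlKD]; exact Submodule.mem_span_singleton_self e
  have heK : e ∈ K := by
    have h5 := (hmemD (σ₀-1) e).mp hemem 0 (by omega)
    simpa using h5
  by_cases hb : D σ₀ = ⊥
  · -- Case a : `D σ₀ = ⊥`; then `K` is spanned by `e, φ⁻¹e, ..., φ^{-(σ₀-1)}e`.
    have hDdim' : ∀ i ≤ σ₀, Module.finrank k (D i) = σ₀ - i := by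
      intro i hi
      rcases Nat.lt_or_ge i σ₀ with h' | h'
      · exact hDdim i (by omega)
      · have h6 : i = σ₀ := by omega
        rw [h6, hb, finrank_bot]; omega
    set C : ℕ → Submodule k (k ⊗[ZMod p] V) :=
      fun j => (Submodule.comap (frobT p k V))^[j] (Submodule.span k {e}) with hC
    have hCsucc : ∀ j, C (j+1) = Submodule.comap (frobT p k V) (C j) :=
      fun j => Function.iterate_succ_apply' _ _ _
    have key : ∀ i, i ≤ σ₀ - 1 → D (σ₀ - 1 - i) = ⨆ j ∈ Finset.range (i+1), C j := by
      intro i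
      induction i with
      | zero =>
        intro _
        rw [Nat.sub_zero, ← hlKD]
        symm
        simp [hC]
      | succ i ih =>
        intro hi1
        have ihh := ih (by omega)
        set m := σ₀ - 1 - (i+1) with hmdef
        have hm1 : m + 1 = σ₀ - 1 - i := by omega
        have hm2 : m + 2 ≤ σ₀ := by omega
        have step1 : Submodule.comap (frobT p k V) (D (m+1)) ≤ D m := by
          intro x hx
          rw [Submodule.mem_comap] at hx
          rw [hmemD]
          intro j hj
          have h6 : frobT p k V x ∈ (Submodule.map (frobT p k V))^[j+1] K :=
            (hmemD (m+1) _).mp hx (j+1) (by omega)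
          rw [Function.iterate_succ_apply'] at h6
          obtain ⟨y, hy, hyx⟩ := h6
          rwa [← frobT_injective p k V hyx]
        have step2 : D (m+1) ⊓ Submodule.comap (frobT p k V) (D (m+1)) ≤
            Submodule.comap (frobT p k V) (D (m+2)) := by
          rintro x ⟨hx1, hx2⟩
          have hx2' : frobT p k V x ∈ D (m+1) := hx2
          rw [hmemD] at hx2'
          refine Submodule.mem_comap.mpr ((hmemD (m+2) _).mpr ?_)
          intro j hj
          rcases Nat.lt_or_ge j (m+2) with h' | h'
          · exact hx2' j (by omega)
          · have hj2 : j = m+2 := by omega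
            subst hj2
            have h7 : x ∈ (Submodule.map (frobT p k V))^[m+1] K :=
              (hmemD (m+1) x).mp hx1 (m+1) le_rfl
            rw [Function.iterate_succ_apply']
            exact ⟨x, h7, rfl⟩
        have d1 : Module.finrank k (D (m+1)) = σ₀ - (m+1) := hDdim' (m+1) (by omega)
        have d2 : Module.finrank k (Submodule.comap (frobT p k V) (D (m+1))) = σ₀ - (m+1) := by
          rw [finrank_comap_frobT]; exact d1
        have d3 : Module.finrank k ↥(D (m+1) ⊓ Submodule.comap (frobT p k V) (D (m+1))) ≤
            σ₀ - (m+2) := by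
          refine le_trans (Submodule.finrank_mono step2) ?_
          rw [finrank_comap_frobT, hDdim' (m+2) hm2]
        have d4 := Submodule.finrank_sup_add_finrank_inf_eq (D (m+1))
          (Submodule.comap (frobT p k V) (D (m+1)))
        have d5 : Module.finrank k (D m) = σ₀ - m := hDdim' m (by omega)
        have hle : D (m+1) ⊔ Submodule.comap (frobT p k V) (D (m+1)) ≤ D m :=
          sup_le (hDmono m) step1
        have heq : D (m+1) ⊔ Submodule.comap (frobT p k V) (D (m+1)) = D m :=
          Submodule.eq_of_le_of_finrank_le hle (by omega)
        rw [← heq]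
        rw [← hm1] at ihh
        rw [ihh, comap_finset_biSup]
        refine le_antisymm (sup_le ?_ ?_) ?_
        · exact biSup_mono fun j hj => Finset.mem_range.mpr
            (by have := Finset.mem_range.mp hj; omega)
        · refine iSup₂_le fun j hj => ?_
          rw [← hCsucc j]
          exact le_iSup₂ (f := fun j _ => C j) (j+1)
            (Finset.mem_range.mpr (by have := Finset.mem_range.mp hj; omega))
        · refine iSup₂_le fun j hj => ?_
          have hj' := Finset.mem_range.mp hj
          rcases Nat.lt_or_ge j (i+1) with h' | h'
          · exact le_trans (le_iSup₂ (f := fun j _ => C j) j (Finset.mem_range.mpr h')) le_sup_left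
          · have hj2 : j = i + 1 := by omega
            subst hj2
            refine le_trans ?_ le_sup_right
            rw [hCsucc i]
            exact le_iSup₂ (f := fun j _ => Submodule.comap (frobT p k V) (C j)) i
              (Finset.mem_range.mpr (by omega))
    have hKsup : K = ⨆ j ∈ Finset.range σ₀, C j := by
      have h6 := key (σ₀ - 1) le_rfl
      rw [show σ₀ - 1 - (σ₀ - 1) = 0 from by omega, hD0, hm] at h6
      exact h6
    have hCker : ∀ j, C j ≤ LinearMap.ker (bcForm p k V B ((1:k) ⊗ₜ[ZMod p] v)) := by
      intro j
      induction j with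
      | zero =>
        rw [show C 0 = Submodule.span k {e} from rfl, Submodule.span_le]
        intro x hx
        rw [Set.mem_singleton_iff.mp hx]
        exact LinearMap.mem_ker.mpr h
      | succ j ih =>
        intro x hx
        rw [hCsucc j, Submodule.mem_comap] at hx
        have h8 := LinearMap.mem_ker.mp (ih hx)
        rw [frobT_ker_pow p k V B _ x (frobT_one_tmul p k V v)] at h8
        exact LinearMap.mem_ker.mpr (pow_eq_zero_iff (Fact.out : p.Prime).ne_zero |>.mp h8)
    have hperp : ∀ x ∈ K, bcForm p k V B ((1:k) ⊗ₜ[ZMod p] v) x = 0 := by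
      intro x hx
      rw [hKsup] at hx
      exact LinearMap.mem_ker.mp ((iSup₂_le fun j _ => hCker j) hx)
    exact hv (rational_perp p k V B hnd K hstrict v hperp)
  · -- Case b : `D σ₀ ≠ ⊥`; then `span {e}` is `φ`-stable and `e` is (up to scalar) rational.
    have hDσle : D σ₀ ≤ D (σ₀ - 1) := by
      have h6 := hDmono (σ₀ - 1)
      rwa [hm] at h6
    have hfr : Module.finrank k (D σ₀) ≠ 0 := by
      intro h0
      exact hb (Submodule.finrank_eq_zero.mp h0)
    have hDσeq : D σ₀ = D (σ₀ - 1) :=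
      Submodule.eq_of_le_of_finrank_le hDσle (by rw [hdimlK]; omega)
    have hememσ : ∀ j ≤ σ₀, e ∈ (Submodule.map (frobT p k V))^[j] K := by
      intro j hj
      exact (hmemD σ₀ e).mp (by rw [hDσeq]; exact hemem) j hj
    obtain ⟨x, hφx⟩ := frobT_surjective p k V e
    have hx_mem : x ∈ D (σ₀ - 1) := by
      rw [hmemD]
      intro j hj
      have h6 := hememσ (j+1) (by omega)
      rw [Function.iterate_succ_apply'] at h6
      obtain ⟨y, hy, hyx⟩ := h6
      rwa [← frobT_injective p k V (hyx.trans hφx.symm)]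
    rw [← hlKD, Submodule.mem_span_singleton] at hx_mem
    obtain ⟨c, hc⟩ := hx_mem
    have hc0 : c ≠ 0 := by
      rintro rfl
      rw [zero_smul] at hc
      rw [← hc, map_zero] at hφx
      exact he1 hφx.symm
    have hp1 : 1 < p := (Fact.out : p.Prime).one_lt
    have hφe : frobT p k V e = ((c^p)⁻¹ : k) • e := by
      have h6 : frobT p k V x = (frobenius k p c) • frobT p k V e := by
        rw [← hc, LinearMap.map_smulₛₗ]
      rw [hφx, frobenius_def] at h6
      have h7 : ((c^p)⁻¹ : k) • e = frobT p k V e := by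
        conv_lhs => rw [h6]
        rw [smul_smul, inv_mul_cancel₀ (pow_ne_zero p hc0), one_smul]
      exact h7.symm
    obtain ⟨μ, hμ⟩ := IsAlgClosed.exists_pow_nat_eq (k := k) (c^p) (n := p - 1) (by omega)
    have hμ0 : μ ≠ 0 := by
      intro h0
      rw [h0, zero_pow (show p - 1 ≠ 0 by omega)] at hμ
      exact pow_ne_zero p hc0 hμ.symm
    have hμp : μ ^ p = c ^ p * μ := by
      calc μ ^ p = μ ^ (p - 1) * μ := by
            rw [← pow_succ]; congr 1; omega
      _ = c ^ p * μ := by rw [hμ]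
    have hfix : frobT p k V (μ • e) = μ • e := by
      rw [LinearMap.map_smulₛₗ, frobenius_def, hφe, smul_smul, hμp,
        mul_comm (c^p) μ, mul_assoc, mul_inv_cancel₀ (pow_ne_zero p hc0), mul_one]
    obtain ⟨w₀, hw₀⟩ := frobT_fixed_descent p k V (μ • e) hfix
    have hμeK : μ • e ∈ K := Submodule.smul_mem K μ heK
    have hperp : ∀ y ∈ K, bcForm p k V B ((1:k) ⊗ₜ[ZMod p] w₀) y = 0 := by
      intro y hy
      rw [← hw₀]
      exact hiso _ hμeK y hy
    have hw00 : w₀ = 0 := rational_perp p k V B hnd K hstrict w₀ hperp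
    rw [hw00, TensorProduct.tmul_zero] at hw₀
    exact smul_ne_zero hμ0 he1 hw₀
end
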